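/- arXiv:1705.08559 — 4 statements merged into one kernel-verified Lean document; each statement's English description precedes it below -/
import Mathlib

section
/- For a finite partition α of finite entropy and a countably-generated σ-subalgebra 𝒜, H(α | 𝒜) equals the integral over X of the entropy of α with respect to the conditional measures μ|_x^𝒜, i.e. H(α | 𝒜) = ∫_X H_{μ|_x^𝒜}(α) dμ(x). -/
open MeasureTheory Real Filter Topology

def IsPartition {X ι : Type*} [MeasurableSpace X] (μ : Measure X) (α : ι → Set X) : Prop :=
  (∀ i, MeasurableSet (α i)) ∧ Pairwise (Function.onFun Disjoint α) ∧ μ (⋃ i, α i)ᶜ = 0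

noncomputable def shannonEntropy {X ι : Type*} [MeasurableSpace X] (μ : Measure X)
    (α : ι → Set X) : ℝ :=
  ∑' i, Real.negMulLog (μ (α i)).toReal

def joinPart {X ι κ : Type*} (α : ι → Set X) (β : κ → Set X) : ι × κ → Set X :=
  fun p => α p.1 ∩ β p.2

/-- `H(α | β) = H(α ∨ β) - H(β)`. -/
noncomputable def condShannonEntropy {X ι κ : Type*} [MeasurableSpace X] (μ : Measure X)
    (α : ι → Set X) (β : κ → Set X) : ℝ :=
  shannonEntropy μ (joinPart α β) - shannonEntropy μ β

/-- `H(α | 𝒜)`: the infimum of `H(α | β)` over countable `𝒜`-measurable partitions `β`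
of finite Shannon entropy. -/
noncomputable def condEntropyAlg {X ι : Type*} [m : MeasurableSpace X] (μ : Measure X)
    (α : ι → Set X) (𝒜 : MeasurableSpace X) : ℝ :=
  sInf {r : ℝ | ∃ β : ℕ → Set X, (∀ i, MeasurableSet[𝒜] (β i)) ∧
    Pairwise (Function.onFun Disjoint β) ∧ μ (⋃ i, β i)ᶜ = 0 ∧
    (Summable fun i => Real.negMulLog (μ (β i)).toReal) ∧
    r = @condShannonEntropy X ι ℕ m μ α β}

/-!
Write `f_𝒢 x = ∑ i, η (μ⟦α i | 𝒢⟧ x)` with `η = negMulLog`; since the conditional measures of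
`α i` agree a.e. with `μ⟦α i | 𝒜⟧`, the right-hand side is `∫ f_𝒜`.
For a countable partition `β`, conditional expectations given `σ(β)` are constant on its atoms,
which gives `H(α | β) = ∫ f_{σ(β)}`. If `β` is `𝒜`-measurable, conditional Jensen for the
concave `η` gives `∫ f_𝒜 ≤ ∫ f_{σ(β)}`, so `∫ f_𝒜` is a lower bound. Conversely, the finite
partitions generated by the first `N` sets of a countable generating family of `𝒜` form a
filtration with supremum `𝒜`; by Lévy's upward theorem and dominated convergence
(`0 ≤ f_𝒢 ≤ card ι`) their conditional entropies converge to `∫ f_𝒜`.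
-/

open ProbabilityTheory MeasurableSpace Set Function

lemma Finset.sum_negMulLog_eq_negMulLog_add_mul {ι : Type*} (s : Finset ι) {a : ι → ℝ} {c : ℝ}
    (ha : ∀ i ∈ s, 0 ≤ a i) (hc : ∑ i ∈ s, a i = c) :
    ∑ i ∈ s, negMulLog (a i) = negMulLog c + c * ∑ i ∈ s, negMulLog (a i / c) := by
  rcases eq_or_ne c 0 with rfl | hc0
  · have hzero : ∀ i ∈ s, a i = 0 := (Finset.sum_eq_zero_iff_of_nonneg ha).1 hc
    simp only [zero_mul, negMulLog_zero, zero_add]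
    exact Finset.sum_eq_zero fun i hi => by rw [hzero i hi, negMulLog_zero]
  · have key (i : ι) : negMulLog (a i) = a i / c * negMulLog c + c * negMulLog (a i / c) := by
      rw [← negMulLog_mul, mul_div_cancel₀ _ hc0]
    rw [Finset.sum_congr rfl fun i _ => key i, Finset.sum_add_distrib, ← Finset.sum_mul,
      ← Finset.sum_div, hc, div_self hc0, one_mul, Finset.mul_sum]

lemma negMulLog_mem_Icc {x : ℝ} (hx : x ∈ Icc 0 1) : negMulLog x ∈ Icc 0 1 :=
  ⟨negMulLog_nonneg hx.1 hx.2, (negMulLog_le_one_sub_self hx.1).trans (by linarith [hx.1])⟩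

namespace MeasurableSpace

variable {X : Type*} {P : Set (Set X)}

lemma subset_or_disjoint_of_measurableSet_generateFrom (hP : P.PairwiseDisjoint id) {A u : Set X}
    (hA : MeasurableSet[generateFrom P] A) (hu : u ∈ P) : u ⊆ A ∨ Disjoint u A := by
  induction A, hA using generateFrom_induction with
  | hC t ht =>
    rcases eq_or_ne u t with rfl | hne
    · exact .inl subset_rfl
    · exact .inr (hP hu ht hne)
  | empty => exact .inr (disjoint_empty u)
  | compl t _ ht =>
    exact ht.symm.imp subset_compl_iff_disjoint_right.2 disjoint_compl_right.mono_left
  | iUnion f _ hf =>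
    by_cases h : ∃ i, u ⊆ f i
    · obtain ⟨i, hi⟩ := h
      exact .inl (hi.trans (subset_iUnion f i))
    · exact .inr (disjoint_iUnion_right.2 fun i => (hf i).resolve_left fun hi => h ⟨i, hi⟩)

lemma eqOn_of_measurable_generateFrom {β : Type*} [MeasurableSpace β] [MeasurableSingletonClass β]
    (hP : P.PairwiseDisjoint id) {f : X → β} (hf : Measurable[generateFrom P] f) {u : Set X}
    (hu : u ∈ P) {x : X} (hx : x ∈ u) : EqOn f (fun _ => f x) u := fun _ hy =>
  (subset_or_disjoint_of_measurableSet_generateFrom hP (hf (measurableSet_singleton (f x))) hu).elim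
    (fun h => h hy) (fun h => absurd rfl (disjoint_left.1 h hx))

end MeasurableSpace

lemma Set.Finite.exists_seq_pairwise_disjoint {X : Type*} {P : Set (Set X)} (hP : P.Finite)
    (hPd : P.PairwiseDisjoint id) :
    ∃ β : ℕ → Set X, range β = insert ∅ P ∧ Pairwise (Disjoint on β) ∧ ∃ N, ∀ k ≥ N, β k = ∅ := by
  have := hP.to_subtype
  obtain ⟨N, ⟨e⟩⟩ := Finite.exists_equiv_fin P
  refine ⟨fun k => if h : k < N then e.symm ⟨k, h⟩ else ∅, ?_, ?_, N,
    fun k hk => dif_neg (not_lt.2 hk)⟩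
  · ext s
    constructor
    · rintro ⟨k, rfl⟩
      dsimp only
      split_ifs
      exacts [.inr (e.symm _).2, .inl rfl]
    · rintro (rfl | hs)
      · exact ⟨N, dif_neg (lt_irrefl N)⟩
      · exact ⟨e ⟨s, hs⟩, by simp⟩
  · intro i j hij
    dsimp only [onFun]
    split_ifs with hi hj hj
    · refine hPd (e.symm _).2 (e.symm _).2 fun h => hij ?_
      simpa using e.symm.injective (Subtype.ext h)
    exacts [disjoint_empty _, empty_disjoint _, empty_disjoint _]

section Partition

variable {X ι : Type*} [Fintype ι] [MeasurableSpace X] {μ : Measure X} {α : ι → Set X}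

lemma shannonEntropy_eq_sum (ν : Measure X) (α : ι → Set X) :
    shannonEntropy ν α = ∑ i, negMulLog (ν (α i)).toReal :=
  tsum_fintype _

lemma negMulLog_toReal_mem_Icc (ν : Measure X) [IsZeroOrProbabilityMeasure ν] (s : Set X) :
    negMulLog (ν s).toReal ∈ Icc 0 1 :=
  negMulLog_mem_Icc ⟨ENNReal.toReal_nonneg,
    ENNReal.toReal_le_of_le_ofReal zero_le_one (by simpa using prob_le_one)⟩

lemma shannonEntropy_mem_Icc (ν : Measure X) [IsZeroOrProbabilityMeasure ν] (α : ι → Set X) :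
    shannonEntropy ν α ∈ Icc 0 (Fintype.card ι : ℝ) := by
  rw [shannonEntropy_eq_sum, ← nsmul_one, ← Finset.card_univ, ← Finset.sum_const]
  exact ⟨Finset.sum_nonneg fun i _ => (negMulLog_toReal_mem_Icc ν _).1,
    Finset.sum_le_sum fun i _ => (negMulLog_toReal_mem_Icc ν _).2⟩

lemma IsPartition.sum_measureReal_inter [IsFiniteMeasure μ] (hα : IsPartition μ α) {B : Set X}
    (hB : MeasurableSet B) : ∑ i, μ.real (α i ∩ B) = μ.real B := by
  rw [← measureReal_iUnion_fintype
    (fun i j hij => (hα.2.1 hij).mono inter_subset_left inter_subset_left)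
    fun i => (hα.1 i).inter hB, ← iUnion_inter, inter_comm, measureReal_def, measureReal_def,
    measure_inter_conull hα.2.2]

lemma IsPartition.sum_negMulLog_inter [IsFiniteMeasure μ] (hα : IsPartition μ α) {B : Set X}
    (hB : MeasurableSet B) :
    ∑ i, negMulLog (μ (α i ∩ B)).toReal
      = negMulLog (μ B).toReal + (μ B).toReal * shannonEntropy μ[|B] α := by
  have hcond (i : ι) : (μ[α i | B]).toReal = μ.real (α i ∩ B) / μ.real B := by
    rw [cond_apply' (hα.1 i), ENNReal.toReal_mul, ENNReal.toReal_inv, inter_comm, div_eq_inv_mul]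
    rfl
  simp_rw [shannonEntropy_eq_sum, hcond]
  exact Finset.sum_negMulLog_eq_negMulLog_add_mul _ (fun i _ => measureReal_nonneg)
    (hα.sum_measureReal_inter hB)

lemma IsPartition.condShannonEntropy_eq_tsum [IsProbabilityMeasure μ] (hα : IsPartition μ α)
    {β : ℕ → Set X} (hβm : ∀ k, MeasurableSet (β k)) (hβd : Pairwise (Disjoint on β))
    (hβfin : Summable fun k => negMulLog (μ (β k)).toReal) :
    condShannonEntropy μ α β = ∑' k, (μ (β k)).toReal * shannonEntropy μ[|β k] α := by
  set F : ι × ℕ → ℝ := fun p => negMulLog (μ (α p.1 ∩ β p.2)).toReal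
  have hβμ : Summable fun k => (μ (β k)).toReal :=
    ENNReal.summable_toReal (by rw [← measure_iUnion hβd hβm]; exact measure_ne_top μ _)
  have hatoms : Summable fun k => (μ (β k)).toReal * shannonEntropy μ[|β k] α :=
    (hβμ.mul_right (Fintype.card ι : ℝ)).of_nonneg_of_le
      (fun k => mul_nonneg ENNReal.toReal_nonneg (shannonEntropy_mem_Icc _ α).1)
      fun k => mul_le_mul_of_nonneg_left (shannonEntropy_mem_Icc _ α).2 ENNReal.toReal_nonneg
  have hinner : Summable fun k => ∑ i, F (i, k) := by
    simp only [F, hα.sum_negMulLog_inter (hβm _)]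
    exact hβfin.add hatoms
  have hF0 : 0 ≤ F := fun p => (negMulLog_toReal_mem_Icc μ _).1
  have hslice (i : ι) : Summable fun k => F (i, k) :=
    hinner.of_nonneg_of_le (fun k => hF0 _)
      fun k => Finset.single_le_sum (fun j _ => hF0 (j, k)) (Finset.mem_univ i)
  have hF : Summable F := (summable_prod_of_nonneg hF0).2 ⟨hslice, .of_finite⟩
  calc condShannonEntropy μ α β
      = ∑' k, ∑ i, F (i, k) - ∑' k, negMulLog (μ (β k)).toReal := by
        change ∑' p, F p - _ = _
        rw [hF.tsum_prod, tsum_fintype, Summable.tsum_finsetSum fun i _ => hslice i]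
        rfl
    _ = ∑' k, (μ (β k)).toReal * shannonEntropy μ[|β k] α := by
        rw [← hinner.tsum_sub hβfin]
        exact tsum_congr fun k => by simp only [F, hα.sum_negMulLog_inter (hβm k)]; ring

end Partition

section CondEntropyFun

variable {X ι : Type*} [Fintype ι] {𝒢 𝒜 : MeasurableSpace X} [m : MeasurableSpace X] {μ : Measure X}
  [IsFiniteMeasure μ] {α : ι → Set X}

/-- `x ↦ H_{μ|_x^𝒢}(α)`, with `μ|_x^𝒢 (α i)` realised as the conditional expectation of the
indicator of `α i`. -/
noncomputable def condEntropyFun (μ : Measure X) (𝒢 : MeasurableSpace X) (α : ι → Set X)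
    (x : X) : ℝ :=
  ∑ i, negMulLog ((μ⟦α i | 𝒢⟧) x)

lemma condExp_indicator_mem_Icc (h𝒢 : 𝒢 ≤ m) {s : Set X} (hs : MeasurableSet s) :
    ∀ᵐ x ∂μ, (μ⟦s | 𝒢⟧) x ∈ Icc 0 1 :=
  Convex.condExp_mem h𝒢 ((integrable_const 1).indicator hs) isClosed_Icc (convex_Icc 0 1)
    (ae_of_all _ fun x => by by_cases hx : x ∈ s <;> simp [hx])

lemma integrable_negMulLog_condExp_indicator (h𝒢 : 𝒢 ≤ m) {s : Set X} (hs : MeasurableSet s) :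
    Integrable (fun x => negMulLog ((μ⟦s | 𝒢⟧) x)) μ := by
  refine .of_bound (continuous_negMulLog.comp_aestronglyMeasurable
    (stronglyMeasurable_condExp.mono h𝒢).aestronglyMeasurable) 1 ?_
  filter_upwards [condExp_indicator_mem_Icc h𝒢 hs] with x hx
  rw [norm_of_nonneg (negMulLog_mem_Icc hx).1]
  exact (negMulLog_mem_Icc hx).2

lemma integrable_condEntropyFun (h𝒢 : 𝒢 ≤ m) (hα : ∀ i, MeasurableSet (α i)) :
    Integrable (condEntropyFun μ 𝒢 α) μ :=
  integrable_finsetSum _ fun i _ => integrable_negMulLog_condExp_indicator h𝒢 (hα i)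

lemma norm_condEntropyFun_le (h𝒢 : 𝒢 ≤ m) (hα : ∀ i, MeasurableSet (α i)) :
    ∀ᵐ x ∂μ, ‖condEntropyFun μ 𝒢 α x‖ ≤ Fintype.card ι := by
  filter_upwards [ae_all_iff.2 fun i => condExp_indicator_mem_Icc (μ := μ) h𝒢 (hα i)] with x hx
  have hmem (i : ι) := negMulLog_mem_Icc (hx i)
  rw [condEntropyFun, norm_of_nonneg (Finset.sum_nonneg fun i _ => (hmem i).1), ← nsmul_one,
    ← Finset.card_univ, ← Finset.sum_const]
  exact Finset.sum_le_sum fun i _ => (hmem i).2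

lemma integral_condEntropyFun_le_of_le (h𝒢𝒜 : 𝒢 ≤ 𝒜) (h𝒜 : 𝒜 ≤ m)
    (hα : ∀ i, MeasurableSet (α i)) :
    ∫ x, condEntropyFun μ 𝒜 α x ∂μ ≤ ∫ x, condEntropyFun μ 𝒢 α x ∂μ := by
  simp only [condEntropyFun]
  rw [integral_finsetSum _ fun i _ => integrable_negMulLog_condExp_indicator h𝒜 (hα i),
    integral_finsetSum _ fun i _ => integrable_negMulLog_condExp_indicator (h𝒢𝒜.trans h𝒜) (hα i)]
  refine Finset.sum_le_sum fun i _ => ?_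
  set f := μ⟦α i | 𝒜⟧
  have hf : Integrable f μ := integrable_condExp
  have hnf : Integrable (negMulLog ∘ f) μ := integrable_negMulLog_condExp_indicator h𝒜 (hα i)
  calc ∫ x, negMulLog (f x) ∂μ
      = ∫ x, μ[negMulLog ∘ f | 𝒢] x ∂μ := (integral_condExp (h𝒢𝒜.trans h𝒜)).symm
    _ ≤ ∫ x, negMulLog (μ[f | 𝒢] x) ∂μ :=
        integral_mono_ae integrable_condExp
          (integrable_negMulLog_condExp_indicator (h𝒢𝒜.trans h𝒜) (hα i) |>.congr <|
            (condExp_condExp_of_le h𝒢𝒜 h𝒜).symm.fun_comp negMulLog)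
          (concaveOn_negMulLog.condExp_map_le (h𝒢𝒜.trans h𝒜)
            continuous_negMulLog.continuousOn.upperSemicontinuousOn
            (condExp_indicator_mem_Icc h𝒜 (hα i) |>.mono fun x hx => hx.1) isClosed_Ici hf hnf)
    _ = ∫ x, negMulLog ((μ⟦α i | 𝒢⟧) x) ∂μ :=
        integral_congr_ae ((condExp_condExp_of_le h𝒢𝒜 h𝒜).fun_comp negMulLog)

lemma tendsto_integral_condEntropyFun (ℱ : Filtration ℕ m) (hα : ∀ i, MeasurableSet (α i)) :
    Tendsto (fun n => ∫ x, condEntropyFun μ (ℱ n) α x ∂μ) atTop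
      (𝓝 (∫ x, condEntropyFun μ (⨆ n, ℱ n) α x ∂μ)) := by
  refine tendsto_integral_of_dominated_convergence (fun _ => Fintype.card ι)
    (fun n => (integrable_condEntropyFun (ℱ.le n) hα).aestronglyMeasurable) (integrable_const _)
    (fun n => norm_condEntropyFun_le (ℱ.le n) hα) ?_
  filter_upwards [ae_all_iff.2 fun i =>
    tendsto_ae_condExp (μ := μ) (ℱ := ℱ) ((α i).indicator fun _ => (1 : ℝ))] with x hx
  exact tendsto_finsetSum _ fun i _ => (continuous_negMulLog.tendsto _).comp (hx i)

lemma integral_shannonEntropy_condExpKernel [StandardBorelSpace X] (h𝒜 : 𝒜 ≤ m)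
    (hα : ∀ i, MeasurableSet (α i)) :
    ∫ x, shannonEntropy (condExpKernel μ 𝒜 x) α ∂μ = ∫ x, condEntropyFun μ 𝒜 α x ∂μ := by
  refine integral_congr_ae ?_
  filter_upwards [ae_all_iff.2 fun i => condExpKernel_ae_eq_condExp (μ := μ) h𝒜 (hα i)] with x hx
  simp only [shannonEntropy_eq_sum, condEntropyFun]
  exact Finset.sum_congr rfl fun i _ => congrArg negMulLog (hx i)

section Atoms

variable {P : Set (Set X)} (hPm : ∀ u ∈ P, MeasurableSet u) (hP : P.PairwiseDisjoint id)
  {u : Set X} (hu : u ∈ P) (hμu : μ u ≠ 0)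
include hPm hP hu hμu

lemma condExp_indicator_generateFrom_eqOn {s : Set X} (hs : MeasurableSet s) :
    EqOn (μ⟦s | generateFrom P⟧) (fun _ => (μ[s | u]).toReal) u := by
  have hPle : generateFrom P ≤ m := generateFrom_le hPm
  obtain ⟨x, hx⟩ := nonempty_of_measure_ne_zero hμu
  have hconst := eqOn_of_measurable_generateFrom hP
    (stronglyMeasurable_condExp (f := s.indicator fun _ => (1 : ℝ)) (μ := μ)).measurable hu hx
  have hint : μ.real u * (μ⟦s | generateFrom P⟧) x = μ.real (u ∩ s) := by
    rw [← smul_eq_mul, ← setIntegral_const, ← setIntegral_congr_fun (hPm u hu) hconst,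
      setIntegral_condExp hPle ((integrable_const 1).indicator hs) (measurableSet_generateFrom hu),
      integral_indicator_const _ hs, measureReal_restrict_apply hs, smul_eq_mul, mul_one,
      inter_comm]
  intro y hy
  rw [hconst hy, cond_apply' hs, ENNReal.toReal_mul, ENNReal.toReal_inv, ← measureReal_def,
    ← measureReal_def, ← hint, ← mul_assoc, inv_mul_cancel₀ ((measureReal_ne_zero_iff).2 hμu),
    one_mul]

lemma condEntropyFun_generateFrom_eqOn (hα : ∀ i, MeasurableSet (α i)) :
    EqOn (condEntropyFun μ (generateFrom P) α) (fun _ => shannonEntropy μ[|u] α) u := fun y hy => by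
  simp only [condEntropyFun, shannonEntropy_eq_sum,
    fun i => condExp_indicator_generateFrom_eqOn hPm hP hu hμu (hα i) hy]

end Atoms

end CondEntropyFun

section CountablePartition

variable {X ι : Type*} [Fintype ι] [m : MeasurableSpace X] {μ : Measure X} {α : ι → Set X}
  {β : ℕ → Set X}

lemma integral_condEntropyFun_generateFrom_range [IsFiniteMeasure μ]
    (hα : ∀ i, MeasurableSet (α i)) (hβm : ∀ k, MeasurableSet (β k))
    (hβd : Pairwise (Disjoint on β)) (hβc : μ (⋃ k, β k)ᶜ = 0) :
    ∫ x, condEntropyFun μ (generateFrom (range β)) α x ∂μ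
      = ∑' k, (μ (β k)).toReal * shannonEntropy μ[|β k] α := by
  have hP : (range β).PairwiseDisjoint id := by
    rintro _ ⟨i, rfl⟩ _ ⟨j, rfl⟩ hne
    exact hβd (ne_of_apply_ne β hne)
  have hPm : ∀ u ∈ range β, MeasurableSet u := by
    rintro _ ⟨k, rfl⟩
    exact hβm k
  have hsum := hasSum_integral_iUnion hβm hβd
    (integrable_condEntropyFun (μ := μ) (generateFrom_le hPm) hα).integrableOn
  rw [Measure.restrict_congr_set (ae_eq_univ.2 hβc), Measure.restrict_univ] at hsum
  rw [← hsum.tsum_eq]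
  refine tsum_congr fun k => ?_
  by_cases hk : μ (β k) = 0
  · simp [Measure.restrict_eq_zero.2 hk, hk]
  · rw [setIntegral_congr_fun (hβm k)
      (condEntropyFun_generateFrom_eqOn hPm hP (mem_range_self k) hk hα), setIntegral_const,
      smul_eq_mul]
    rfl

lemma IsPartition.condShannonEntropy_eq_integral [IsProbabilityMeasure μ] (hα : IsPartition μ α)
    (hβm : ∀ k, MeasurableSet (β k)) (hβd : Pairwise (Disjoint on β)) (hβc : μ (⋃ k, β k)ᶜ = 0)
    (hβfin : Summable fun k => negMulLog (μ (β k)).toReal) :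
    condShannonEntropy μ α β = ∫ x, condEntropyFun μ (generateFrom (range β)) α x ∂μ := by
  rw [hα.condShannonEntropy_eq_tsum hβm hβd hβfin,
    integral_condEntropyFun_generateFrom_range hα.1 hβm hβd hβc]

end CountablePartition

section CondEntropyAlg

variable {X ι : Type*} [Fintype ι] {𝒜 : MeasurableSpace X} [m : MeasurableSpace X]
  {μ : Measure X} [IsProbabilityMeasure μ] {α : ι → Set X}

lemma IsPartition.integral_condEntropyFun_le_condShannonEntropy (hα : IsPartition μ α)
    (h𝒜 : 𝒜 ≤ m) {β : ℕ → Set X} (hβ𝒜 : ∀ k, MeasurableSet[𝒜] (β k))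
    (hβd : Pairwise (Disjoint on β)) (hβc : μ (⋃ k, β k)ᶜ = 0)
    (hβfin : Summable fun k => negMulLog (μ (β k)).toReal) :
    ∫ x, condEntropyFun μ 𝒜 α x ∂μ ≤ condShannonEntropy μ α β := by
  have hβ𝒜' : generateFrom (range β) ≤ 𝒜 := generateFrom_le (forall_mem_range.2 hβ𝒜)
  rw [hα.condShannonEntropy_eq_integral (fun k => h𝒜 _ (hβ𝒜 k)) hβd hβc hβfin]
  exact integral_condEntropyFun_le_of_le hβ𝒜' h𝒜 hα.1

lemma IsPartition.exists_condShannonEntropy_eq_integral_memPartition (hα : IsPartition μ α)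
    (h𝒜 : 𝒜 ≤ m) {t : ℕ → Set X} (ht : ∀ j, MeasurableSet[𝒜] (t j)) (N : ℕ) :
    ∃ β : ℕ → Set X, (∀ k, MeasurableSet[𝒜] (β k)) ∧ Pairwise (Disjoint on β) ∧
      μ (⋃ k, β k)ᶜ = 0 ∧ (Summable fun k => negMulLog (μ (β k)).toReal) ∧
      ∫ x, condEntropyFun μ (generateFrom (memPartition t N)) α x ∂μ
        = condShannonEntropy μ α β := by
  obtain ⟨β, hrange, hβd, N₀, hN₀⟩ := (finite_memPartition t N).exists_seq_pairwise_disjoint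
    fun u hu v hv => disjoint_memPartition t N hu hv
  have hgen : generateFrom (range β) = generateFrom (memPartition t N) := by
    rw [hrange, MeasurableSpace.generateFrom_insert_empty]
  have hβ𝒜 (k : ℕ) : MeasurableSet[𝒜] (β k) :=
    @generateFrom_memPartition_le X 𝒜 t ht N _
      (hgen ▸ measurableSet_generateFrom (mem_range_self k))
  have hβc : μ (⋃ k, β k)ᶜ = 0 := by
    rw [← sUnion_range, hrange, sUnion_insert, empty_union, sUnion_memPartition, compl_univ,
      measure_empty]
  have hβfin : Summable fun k => negMulLog (μ (β k)).toReal :=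
    summable_of_ne_finset_zero (s := Finset.range N₀) fun k hk => by
      simp [hN₀ k (by simpa using hk)]
  refine ⟨β, hβ𝒜, hβd, hβc, hβfin, ?_⟩
  rw [hα.condShannonEntropy_eq_integral (fun k => h𝒜 _ (hβ𝒜 k)) hβd hβc hβfin, hgen]

lemma IsPartition.condEntropyAlg_eq_integral_condEntropyFun (hα : IsPartition μ α) (h𝒜 : 𝒜 ≤ m)
    (h𝒜cg : @CountablyGenerated X 𝒜) :
    condEntropyAlg μ α 𝒜 = ∫ x, condEntropyFun μ 𝒜 α x ∂μ := by
  set t := @natGeneratingSequence X 𝒜 h𝒜cg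
  have ht (j : ℕ) : MeasurableSet[𝒜] (t j) := @measurableSet_natGeneratingSequence X 𝒜 h𝒜cg j
  have ht' (j : ℕ) : MeasurableSet (t j) := h𝒜 _ (ht j)
  have hsup : ⨆ N, partitionFiltration ht' N = 𝒜 :=
    (iSup_partitionFiltration_eq_generateFrom_range ht').trans
      (@generateFrom_natGeneratingSequence X 𝒜 h𝒜cg)
  have htend : Tendsto (fun N => ∫ x, condEntropyFun μ (partitionFiltration ht' N) α x ∂μ) atTop
      (𝓝 (∫ x, condEntropyFun μ 𝒜 α x ∂μ)) :=
    hsup ▸ tendsto_integral_condEntropyFun (partitionFiltration ht') hα.1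
  have hmem (N : ℕ) := hα.exists_condShannonEntropy_eq_integral_memPartition h𝒜 ht N
  refine IsGLB.csInf_eq ⟨?_, fun b hb => ge_of_tendsto' htend fun N => hb (hmem N)⟩ ⟨_, hmem 0⟩
  rintro _ ⟨β, hβ𝒜, hβd, hβc, hβfin, rfl⟩
  exact hα.integral_condEntropyFun_le_condShannonEntropy h𝒜 hβ𝒜 hβd hβc hβfin

end CondEntropyAlg

theorem stmt3_general {X : Type*} [m : MeasurableSpace X] [StandardBorelSpace X]
    (μ : Measure X) [IsProbabilityMeasure μ]
    (𝒜 : MeasurableSpace X) (h𝒜 : 𝒜 ≤ m) (hcg : @MeasurableSpace.CountablyGenerated X 𝒜)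
    {n : ℕ} (α : Fin n → Set X) (hα : @IsPartition X (Fin n) m μ α) :
    @condEntropyAlg X (Fin n) m μ α 𝒜 =
      ∫ x, @shannonEntropy X (Fin n) m (ProbabilityTheory.condExpKernel (mΩ := m) μ 𝒜 x) α ∂μ := by
  rw [integral_shannonEntropy_condExpKernel (m := m) h𝒜 hα.1]
  exact IsPartition.condEntropyAlg_eq_integral_condEntropyFun (m := m) hα h𝒜 hcg

/-- For a finite partition `α` of finite entropy and a countably-generated σ-subalgebra `𝒜`,
`H(α | 𝒜) = ∫_X H_{μ|_x^𝒜}(α) dμ(x)`, where `μ|_x^𝒜` are the conditional measures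
(disintegration of `μ` along `𝒜`). -/
theorem stmt3 {X : Type*} [m : MeasurableSpace X] [StandardBorelSpace X] [Nonempty X]
    (μ : Measure X) [IsProbabilityMeasure μ]
    (𝒜 : MeasurableSpace X) (h𝒜 : 𝒜 ≤ m) (hcg : @MeasurableSpace.CountablyGenerated X 𝒜)
    {n : ℕ} (α : Fin n → Set X) (hα : @IsPartition X (Fin n) m μ α)
    (hαfin : Summable fun i => Real.negMulLog (μ (α i)).toReal) :
    @condEntropyAlg X (Fin n) m μ α 𝒜 =
      ∫ x, @shannonEntropy X (Fin n) m (ProbabilityTheory.condExpKernel (mΩ := m) μ 𝒜 x) α ∂μ :=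
  stmt3_general (m := m) μ 𝒜 h𝒜 hcg α hα
end

section
/- Let P: 𝒫(X × Y) → 𝒫(X × Y) be a probability kernel such that for every (x,y), the X-marginal of P(δ_{(x,y)}) is δ_x, and P(δ_{(x,y₁)}) = P(δ_{(x,y₂)}) for all x, y₁, y₂. Then for a probability measure μ on X × Y, P(μ) = μ if and only if the conditional measures of μ over the σ-algebra of the X-coordinate satisfy μ|_{(x,y)}^𝒜 = P(δ_{(x,y)}) for μ-a.e. (x,y). -/
open MeasureTheory ProbabilityTheory

/-!
Since `κ (x, y)` depends only on `x` and has `X`-marginal `δ_x`, `κ` is a kernel out of `𝒜` which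
is proper: `κ p (s ∩ A) = 1_A(p) · κ p s` for `A ∈ 𝒜`. For a proper kernel, invariance `κ ∘ μ = μ`
gives `∫_A κ(·) s dμ = μ (s ∩ A)` for `A ∈ 𝒜`, i.e. `μ|_𝒜 ⊗ κ` is the image of `μ` under the
diagonal. That is the identity which determines the conditional kernel `μ|^𝒜` almost everywhere.
Conversely `μ|^𝒜 ∘ μ = μ` always holds.
-/

namespace ProbabilityTheory.Kernel

variable {Ω β : Type*} {m : MeasurableSpace Ω} [mΩ : MeasurableSpace Ω] [mβ : MeasurableSpace β]

lemma comp_trim (hm : m ≤ mΩ) (η : Kernel[m, mβ] Ω β) (μ : Measure Ω) :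
    η ∘ₘ μ.trim hm = η ∘ₘ μ := by
  ext s hs
  rw [Measure.bind_apply hs η.measurable.aemeasurable,
    Measure.bind_apply hs (η.measurable.mono hm le_rfl).aemeasurable,
    lintegral_trim hm (η.measurable_coe hs)]

variable {η : Kernel[m, mΩ] Ω Ω}

lemma isProper_of_forall_ae_mem (hm : m ≤ mΩ)
    (hη : ∀ ω A, MeasurableSet[m] A → ω ∈ A → ∀ᵐ ω' ∂η ω, ω' ∈ A) : IsProper η := by
  refine IsProper.of_inter_eq_indicator_mul hm fun s _ A hA ω ↦ ?_
  by_cases hω : ω ∈ A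
  · rw [Set.indicator_of_mem hω, Pi.one_apply, one_mul]
    exact measure_inter_conull (hη ω A hA hω)
  · rw [Set.indicator_of_notMem hω, zero_mul]
    exact measure_mono_null Set.inter_subset_right (compl_compl A ▸ hη ω Aᶜ hA.compl hω)

lemma IsProper.trim_compProd_eq_map_diag_of_comp_eq_self (hη : IsProper η) (hm : m ≤ mΩ)
    {μ : Measure Ω} [IsFiniteMeasure μ] [IsFiniteKernel η] (hμ : η ∘ₘ μ = μ) :
    μ.trim hm ⊗ₘ η = @Measure.map Ω (Ω × Ω) mΩ (m.prod mΩ) Function.diag μ := by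
  have h_diag : Measurable[mΩ, m.prod mΩ] (Function.diag : Ω → Ω × Ω) :=
    (measurable_id'' hm).prodMk measurable_id
  refine Measure.ext_prod fun {A s} hA hs ↦ ?_
  rw [Measure.compProd_apply_prod hA hs, setLIntegral_trim hm (η.measurable_coe hs) hA,
    hη.setLIntegral_eq_comp hm hs hA, hμ, Measure.map_apply h_diag (hA.prod hs), Set.inter_comm]
  rfl

theorem IsProper.comp_eq_self_iff_ae_eq_condExpKernel [StandardBorelSpace Ω] (hη : IsProper η)
    (hm : m ≤ mΩ) {μ : Measure Ω} [IsFiniteMeasure μ] [IsFiniteKernel η] :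
    η ∘ₘ μ = μ ↔ ∀ᵐ ω ∂μ, condExpKernel μ m ω = η ω := by
  refine ⟨fun hμ ↦ ae_of_ae_trim hm (ae_eq_of_compProd_eq ?_), fun h ↦ ?_⟩
  · rw [compProd_trim_condExpKernel, hη.trim_compProd_eq_map_diag_of_comp_eq_self hm hμ]
  · rw [← Measure.bind_congr_right h, ← comp_trim hm, condExpKernel_comp_trim]

end ProbabilityTheory.Kernel

theorem stmt6_general {X Y : Type*} [MeasurableSpace X] [MeasurableSpace Y]
    [StandardBorelSpace X] [StandardBorelSpace Y] [Nonempty Y]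
    (κ : Kernel (X × Y) (X × Y)) [IsMarkovKernel κ]
    (hfst : ∀ x : X, ∀ y : Y, (κ (x, y)).map Prod.fst = Measure.dirac x)
    (hconst : ∀ x : X, ∀ y₁ y₂ : Y, κ (x, y₁) = κ (x, y₂))
    (μ : Measure (X × Y)) [IsProbabilityMeasure μ] :
    μ.bind (fun p => κ p) = μ ↔
      ∀ᵐ p ∂μ,
        (condExpKernel μ (MeasurableSpace.comap Prod.fst inferInstance) p : Measure (X × Y))
          = κ p := by
  obtain ⟨y₀⟩ := ‹Nonempty Y›
  have hm : MeasurableSpace.comap Prod.fst inferInstance ≤ (inferInstance : MeasurableSpace _) :=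
    (measurable_fst (α := X) (β := Y)).comap_le
  let η : Kernel[.comap Prod.fst inferInstance, inferInstance] (X × Y) (X × Y) :=
    κ.comap (fun p ↦ (p.1, y₀)) ((comap_measurable Prod.fst).prodMk measurable_const)
  have hη : ⇑η = fun p ↦ κ p := funext fun p ↦ hconst p.1 y₀ p.2
  have h_proper : η.IsProper := by
    refine Kernel.isProper_of_forall_ae_mem hm ?_
    rintro p _ ⟨B, hB, rfl⟩ hp
    refine ae_of_ae_map measurable_fst.aemeasurable ?_
    rw [hη, hfst]
    exact (ae_dirac_iff hB).mpr hp
  rw [← hη, h_proper.comp_eq_self_iff_ae_eq_condExpKernel hm, hη]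

/-- Let `κ` be a probability kernel on `X × Y` such that the `X`-marginal of `κ (x, y)` is
`δ_x` and `κ (x, y)` does not depend on `y`. Then a probability measure `μ` on `X × Y`
satisfies `κ(μ) = μ` iff the conditional measures of `μ` along the σ-algebra `𝒜` of the
first coordinate satisfy `μ|_{(x,y)}^𝒜 = κ (x, y)` for `μ`-a.e. `(x, y)`. -/
theorem stmt6 {X Y : Type*} [MeasurableSpace X] [MeasurableSpace Y]
    [StandardBorelSpace X] [StandardBorelSpace Y] [Nonempty X] [Nonempty Y]
    (κ : Kernel (X × Y) (X × Y)) [IsMarkovKernel κ]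
    (hfst : ∀ x : X, ∀ y : Y, (κ (x, y)).map Prod.fst = Measure.dirac x)
    (hconst : ∀ x : X, ∀ y₁ y₂ : Y, κ (x, y₁) = κ (x, y₂))
    (μ : Measure (X × Y)) [IsProbabilityMeasure μ] :
    μ.bind (fun p => κ p) = μ ↔
      ∀ᵐ p ∂μ,
        (condExpKernel μ (MeasurableSpace.comap Prod.fst inferInstance) p : Measure (X × Y))
          = κ p :=
  stmt6_general κ hfst hconst μ
end

section
/- If ν is a Gibbs measure for a Gibbs structure 𝒢 and F ⊆ V, then for ν-almost every ω, the conditional measure ν|_ω^{ℬ(F)} is a Gibbs measure for the pinned structure 𝒢_{F,ω} (obtained by fixing the coordinates in F to agree with ω). -/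
open MeasureTheory Real Filter Topology
open scoped ENNReal

noncomputable section
open scoped Classical

/-- A Gibbs structure: a vertex set `V`, alphabets `A v`, and a potential `Φ` assigning to
each finite `T ⊆ V` a function of configurations, such that each vertex lies in only
finitely many `T` with `Φ T ≢ 0`. -/
structure GibbsStructure (V : Type*) (A : V → Type*) where
  Φ : Finset V → ((∀ v, A v) → ℝ)
  locFin : ∀ v : V, {T : Finset V | v ∈ T ∧ Φ T ≠ 0}.Finite

namespace GibbsStructure

variable {V : Type*} {A : V → Type*} [∀ v, Fintype (A v)] [∀ v, Nonempty (A v)]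
  [∀ v, MeasurableSpace (A v)] [∀ v, MeasurableSingletonClass (A v)]

/-- The energy of the configuration `x` contributed by all terms of the potential that
meet the finite window `Λ`: `∑_{T ∩ Λ ≠ ∅} Φ_T(x)`. -/
def energy (𝒢 : GibbsStructure V A) (Λ : Finset V) (x : ∀ v, A v) : ℝ :=
  ∑ᶠ T ∈ {T : Finset V | ((T : Set V) ∩ (Λ : Set V)).Nonempty}, 𝒢.Φ T x

/-- Replace the coordinates of `η` inside `Λ` by `τ`. -/
def paste (Λ : Finset V) (η : ∀ v, A v) (τ : ∀ v : Λ, A v) : ∀ v, A v :=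
  fun v => if h : v ∈ Λ then τ ⟨v, h⟩ else η v

/-- The Gibbs weight of the local configuration `τ` in the window `Λ` around `η`, where in
addition the coordinates in `F` are pinned to the configuration `pin` (take `F = ∅` for the
unpinned kernel). -/
def pinWeight (𝒢 : GibbsStructure V A) (F : Set V) (pin : ∀ v, A v) (Λ : Finset V)
    (η : ∀ v, A v) (τ : ∀ v : Λ, A v) : ℝ :=
  if ∀ v ∈ F, paste Λ η τ v = pin v then Real.exp (-(energy 𝒢 Λ (paste Λ η τ))) else 0

/-- The Gibbs resampling measure `π_{𝒢,Λ}(η)` (with pinning `(F, pin)`): resample the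
coordinates in `Λ` with probabilities proportional to `exp(-∑_{T ∩ Λ ≠ ∅} Φ_T)`, keeping the
other coordinates of `η` fixed. -/
def kernelMeasure (𝒢 : GibbsStructure V A) (F : Set V) (pin : ∀ v, A v) (Λ : Finset V)
    (η : ∀ v, A v) : Measure (∀ v, A v) :=
  ∑ τ : ∀ v : Λ, A v,
    (ENNReal.ofReal (pinWeight 𝒢 F pin Λ η τ / ∑ τ' : ∀ v : Λ, A v, pinWeight 𝒢 F pin Λ η τ'))
      • Measure.dirac (paste Λ η τ)

/-- The Gibbs probability kernel `P_{𝒢,Λ} : 𝒫(Ω) → 𝒫(Ω)` (no pinning). -/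
def gibbsUpdate (𝒢 : GibbsStructure V A) (Λ : Finset V) (μ : Measure (∀ v, A v)) :
    Measure (∀ v, A v) :=
  μ.bind fun η => kernelMeasure 𝒢 ∅ η Λ η

/-- `ν` is a Gibbs measure for `𝒢`: it is fixed by every kernel `P_{𝒢,Λ}`, `Λ ⋐ V`. -/
def IsGibbs (𝒢 : GibbsStructure V A) (ν : Measure (∀ v, A v)) : Prop :=
  ∀ Λ : Finset V, gibbsUpdate 𝒢 Λ ν = ν

/-- `ν` is a Gibbs measure for the pinned structure `𝒢_{S,ω}`: it is supported on
configurations agreeing with `ω` on `S` and fixed by `P_{𝒢,Λ}` for all finite `Λ ⊆ V ∖ S`. -/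
def IsGibbsPinned (𝒢 : GibbsStructure V A) (S : Set V) (ω : ∀ v, A v)
    (ν : Measure (∀ v, A v)) : Prop :=
  (∀ᵐ t ∂ν, ∀ v ∈ S, t v = ω v) ∧
    ∀ Λ : Finset V, (Λ : Set V) ⊆ Sᶜ → gibbsUpdate 𝒢 Λ ν = ν

/-- The boundary `∂Λ = ∪ {T ∖ Λ : T ∩ Λ ≠ ∅, Φ_T ≢ 0}`. -/
def boundary (𝒢 : GibbsStructure V A) (Λ : Finset V) : Set V :=
  ⋃ T ∈ {T : Finset V | ((T : Set V) ∩ (Λ : Set V)).Nonempty ∧ 𝒢.Φ T ≠ 0},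
    ((T : Set V) \ (Λ : Set V))

/-- Extend a configuration on `W` to a full configuration (arbitrarily off `W`). -/
def extendFull (W : Finset V) (x : ∀ v : W, A v) : ∀ v, A v :=
  fun v => if h : v ∈ W then x ⟨v, h⟩ else Classical.arbitrary (A v)

/-- Restrict a full configuration to `W`. -/
def restr (W : Finset V) (x : ∀ v, A v) : ∀ v : W, A v := fun v => x v

/-- Replace the coordinates of a `W`-configuration `η` inside `Λ` by `τ`. -/
def pasteW (W Λ : Finset V) (η : ∀ v : W, A v) (τ : ∀ v : Λ, A v) : ∀ v : W, A v :=
  fun v => if h : (v : V) ∈ Λ then τ ⟨v, h⟩ else η v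

/-- The Gibbs resampling measure `π_{𝒢,Λ}` acting on configurations on the finite window
`W`; by the Markov property this is the correct local kernel when `Λ ∪ ∂Λ ⊆ W`. -/
def kernelMeasureW (𝒢 : GibbsStructure V A) (W Λ : Finset V) (η : ∀ v : W, A v) :
    Measure (∀ v : W, A v) :=
  ∑ τ : ∀ v : Λ, A v,
    (ENNReal.ofReal (Real.exp (-(energy 𝒢 Λ (extendFull W (pasteW W Λ η τ)))) /
        ∑ τ' : ∀ v : Λ, A v, Real.exp (-(energy 𝒢 Λ (extendFull W (pasteW W Λ η τ'))))))
      • Measure.dirac (pasteW W Λ η τ)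

/-- The σ-algebra `ℬ(F)` generated by the coordinates in `F ⊆ V`. -/
def coordSigma (F : Set V) : MeasurableSpace (∀ v, A v) :=
  ⨆ v ∈ F, MeasurableSpace.comap (fun x => x v) inferInstance

end GibbsStructure

open GibbsStructure ProbabilityTheory

/-!
Write `κ` for the conditional kernel of `ν` along `ℬ(F)`. Every `ℬ(F)`-measurable set `B`
satisfies `κ_ω(B) = 1_B(ω)` for a.e. `ω`; applied to the countably many events `{t v = a}`,
`v ∈ F`, this pins `κ_ω` to `ω` on `F`.

For `Λ ⊆ V ∖ F` the resampling measure `π_Λ(η)` does not move the coordinates in `F`, so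
`π_Λ(η)(B ∩ s) = 1_B(η) π_Λ(η)(s)` for `B ∈ ℬ(F)`. Together with `ν P_Λ = ν` this shows that
`ω ↦ κ_ω P_Λ` and `κ` have the same joint law with `ν|ℬ(F)`, hence agree a.e. The map
`η ↦ π_Λ(η)` need not be measurable (the potential is arbitrary), but `ν P_Λ = ν ≠ 0` forces it
to be a.e.-measurable, since `Measure.bind` is zero otherwise; so it can be replaced by a
measurable Markov kernel.
-/

namespace MeasureTheory.Measure

variable {α β : Type*} [MeasurableSpace α] [MeasurableSpace β]

theorem _root_.AEMeasurable.of_bind_ne_zero {μ : Measure α} {f : α → Measure β}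
    (h : μ.bind f ≠ 0) : AEMeasurable f μ :=
  AEMeasurable.of_map_ne_zero fun hmap => h (by rw [Measure.bind, hmap, join_zero])

theorem apply_inter_eq_indicator {ρ : Measure α} {B : Set α} {a : α}
    (h : ∀ᵐ t ∂ρ, t ∈ B ↔ a ∈ B) (s : Set α) :
    ρ (B ∩ s) = B.indicator (fun _ => ρ s) a := by
  by_cases ha : a ∈ B
  · simp only [ha, iff_true] at h
    rw [Set.indicator_of_mem ha, Set.inter_comm, measure_inter_conull (ae_iff.1 h)]
  · simp only [ha, iff_false] at h
    rw [Set.indicator_of_notMem ha]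
    exact measure_mono_null Set.inter_subset_left (by simpa [ae_iff] using h)

end MeasureTheory.Measure

namespace ProbabilityTheory

theorem measurable_diag_of_le {Ω : Type*} {m mΩ : MeasurableSpace Ω} (hm : m ≤ mΩ) :
    Measurable[mΩ, m.prod mΩ] (Function.diag : Ω → Ω × Ω) :=
  (measurable_id'' hm).prodMk measurable_id

variable {Ω : Type*} {m : MeasurableSpace Ω} [mΩ : MeasurableSpace Ω] [StandardBorelSpace Ω]
  {μ : Measure Ω} [IsFiniteMeasure μ]

theorem condExpKernel_ae_ae_of_ae (hm : m ≤ mΩ) {p : Ω → Prop} (h : ∀ᵐ ω ∂μ, p ω) :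
    ∀ᵐ ω ∂μ, ∀ᵐ t ∂condExpKernel μ m ω, p t := by
  rw [← condExpKernel_comp_trim (μ := μ) hm] at h
  exact ae_of_ae_trim hm (Measure.ae_ae_of_ae_comp h)

theorem condExpKernel_ae_ae_mem_iff (hm : m ≤ mΩ) {B : Set Ω} (hB : MeasurableSet[m] B) :
    ∀ᵐ ω ∂μ, ∀ᵐ t ∂condExpKernel μ m ω, t ∈ B ↔ ω ∈ B := by
  set D : Set (Ω × Ω) := B ×ˢ B ∪ Bᶜ ×ˢ Bᶜ
  have hD : MeasurableSet[m.prod mΩ] D :=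
    (hB.prod (hm B hB)).union (hB.compl.prod (hm B hB).compl)
  have hdiag_ae : ∀ᵐ x ∂(μ.trim hm) ⊗ₘ condExpKernel μ m, x ∈ D := by
    rw [compProd_trim_condExpKernel hm]
    have hdiag := @Measurable.aemeasurable _ _ _ (m.prod mΩ) _ μ (measurable_diag_of_le hm)
    refine (ae_map_iff (mβ := m.prod mΩ) hdiag hD).2
      (ae_of_all _ fun ω => show Function.diag ω ∈ D from ?_)
    by_cases hω : ω ∈ B <;> simp [D, hω]
  refine ae_of_ae_trim hm ((Measure.ae_ae_of_ae_compProd hdiag_ae).mono fun ω hω => ?_)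
  filter_upwards [hω] with t ht
  by_cases hω : ω ∈ B <;> simp_all [D]

theorem setLIntegral_lintegral_condExpKernel (hm : m ≤ mΩ) {h : Ω → ℝ≥0∞}
    (hh : Measurable h) {B : Set Ω} (hB : MeasurableSet[m] B) :
    ∫⁻ ω in B, ∫⁻ t, h t ∂condExpKernel μ m ω ∂μ.trim hm = ∫⁻ ω in B, h ω ∂μ := by
  have hhsnd : Measurable[m.prod mΩ] fun x : Ω × Ω => h x.2 := hh.comp measurable_snd
  calc ∫⁻ ω in B, ∫⁻ t, h t ∂condExpKernel μ m ω ∂μ.trim hm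
      = ∫⁻ x in B ×ˢ Set.univ, h x.2 ∂((μ.trim hm) ⊗ₘ condExpKernel μ m) := by
        rw [Measure.setLIntegral_compProd hhsnd hB MeasurableSet.univ]
        simp only [Measure.restrict_univ]
    _ = ∫⁻ ω in B, h ω ∂μ := by
        rw [compProd_trim_condExpKernel hm, @setLIntegral_map Ω (Ω × Ω) mΩ (m.prod mΩ) μ _ _ _
          (hB.prod MeasurableSet.univ) hhsnd (measurable_diag_of_le hm)]
        congr 2
        ext ω
        simp

theorem ae_condExpKernel_bind_eq_self (hm : m ≤ mΩ) [NeZero μ] {f : Ω → Measure Ω}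
    (hf_prob : ∀ ω, IsProbabilityMeasure (f ω)) (hf_inv : μ.bind f = μ)
    (hf_loc : ∀ ω B, MeasurableSet[m] B → ∀ᵐ t ∂f ω, t ∈ B ↔ ω ∈ B) :
    ∀ᵐ ω ∂μ, (condExpKernel μ m ω).bind f = condExpKernel μ m ω := by
  have hf_ae : AEMeasurable f μ :=
    AEMeasurable.of_bind_ne_zero (hf_inv.symm ▸ NeZero.ne μ)
  obtain ⟨g, hg, hg_prob, hfg⟩ := hf_ae.exists_ae_eq_range_subset
    (t := {ρ | IsProbabilityMeasure ρ}) (ae_of_all _ hf_prob)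
    ⟨f (Measure.nonempty_of_neZero μ).some, hf_prob _⟩
  let G : Kernel Ω Ω := ⟨g, hg⟩
  have : IsMarkovKernel G := ⟨fun ω => hg_prob ⟨ω, rfl⟩⟩
  have hcomp : (μ.trim hm) ⊗ₘ (G ∘ₖ condExpKernel μ m) = (μ.trim hm) ⊗ₘ condExpKernel μ m := by
    refine Measure.ext_prod fun {B s} hB hs => ?_
    rw [Measure.compProd_apply_prod hB hs, Measure.compProd_apply_prod hB hs]
    calc ∫⁻ ω in B, (G ∘ₖ condExpKernel μ m) ω s ∂μ.trim hm
        = ∫⁻ η in B, g η s ∂μ := by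
          simp_rw [Kernel.comp_apply' _ _ _ hs]
          exact setLIntegral_lintegral_condExpKernel hm (G.measurable_coe hs) hB
      _ = ∫⁻ η in B, f η s ∂μ :=
          (lintegral_congr_ae (ae_restrict_of_ae (hfg.fun_comp (· s)))).symm
      _ = ∫⁻ η, f η (B ∩ s) ∂μ := by
          rw [← lintegral_indicator (hm B hB)]
          exact lintegral_congr fun η =>
            (Measure.apply_inter_eq_indicator (hf_loc η B hB) s).symm
      _ = μ (B ∩ s) := by rw [← Measure.bind_apply ((hm B hB).inter hs) hf_ae, hf_inv]
      _ = ∫⁻ η in B, s.indicator 1 η ∂μ := by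
          rw [lintegral_indicator_one hs, Measure.restrict_apply hs, Set.inter_comm]
      _ = ∫⁻ ω in B, condExpKernel μ m ω s ∂μ.trim hm := by
          rw [← setLIntegral_lintegral_condExpKernel hm (measurable_one.indicator hs) hB]
          simp_rw [lintegral_indicator_one hs]
  have hκ : G ∘ₖ condExpKernel μ m =ᵐ[μ.trim hm] condExpKernel μ m :=
    Kernel.ae_eq_of_compProd_eq hcomp
  filter_upwards [ae_of_ae_trim hm hκ, condExpKernel_ae_ae_of_ae hm hfg] with ω hω hfgω
  rw [Measure.bind_congr_right hfgω]
  exact hω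

end ProbabilityTheory

namespace GibbsStructure

variable {V : Type*} {A : V → Type*} [∀ v, MeasurableSpace (A v)]

theorem coordSigma_le (F : Set V) : coordSigma (A := A) F ≤ MeasurableSpace.pi :=
  iSup₂_le fun v _ => (measurable_pi_apply v).comap_le

theorem measurableSet_coordSigma_eval [∀ v, MeasurableSingletonClass (A v)] {F : Set V} {v : V}
    (hv : v ∈ F) (a : A v) : MeasurableSet[coordSigma (A := A) F] {t | t v = a} :=
  le_iSup₂ (f := fun v (_ : v ∈ F) => MeasurableSpace.comap (fun x : ∀ w, A w => x v) _) v hv _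
    ⟨{a}, measurableSet_singleton a, rfl⟩

theorem mem_iff_of_forall_eq {F : Set V} {B : Set (∀ v, A v)}
    (hB : MeasurableSet[coordSigma (A := A) F] B) {x y : ∀ v, A v}
    (hxy : ∀ v ∈ F, x v = y v) : x ∈ B ↔ y ∈ B := by
  have hle : coordSigma (A := A) F ≤
      MeasurableSpace.comap (fun (z : ∀ v, A v) (v : F) => z v) ⊤ := by
    refine iSup₂_le fun v hv => ?_
    rw [show (fun z : ∀ w, A w => z v)
        = (fun y : ∀ w : F, A w => y ⟨v, hv⟩) ∘ (fun z (w : F) => z w) from rfl,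
      ← MeasurableSpace.comap_comp]
    exact MeasurableSpace.comap_mono le_top
  obtain ⟨S, -, rfl⟩ := MeasurableSpace.measurableSet_comap.mp (hle B hB)
  have hxy' : (fun v : F => x v) = fun v : F => y v := funext fun v => hxy v v.2
  simp only [Set.mem_preimage, hxy']

theorem isProbabilityMeasure_kernelMeasure [∀ v, Fintype (A v)] [∀ v, Nonempty (A v)]
    (𝒢 : GibbsStructure V A) (pin : ∀ v, A v) (Λ : Finset V) (η : ∀ v, A v) :
    IsProbabilityMeasure (kernelMeasure 𝒢 ∅ pin Λ η) := by
  have hw : ∀ τ, 0 < pinWeight 𝒢 ∅ pin Λ η τ := fun τ => by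
    simpa [pinWeight] using Real.exp_pos _
  have hZ : 0 < ∑ τ, pinWeight 𝒢 ∅ pin Λ η τ :=
    Finset.sum_pos (fun τ _ => hw τ) Finset.univ_nonempty
  constructor
  simp only [kernelMeasure, Measure.coe_finsetSum, Finset.sum_apply, Measure.smul_apply,
    measure_univ, smul_eq_mul, mul_one]
  rw [← ENNReal.ofReal_sum_of_nonneg fun τ _ => div_nonneg (hw τ).le hZ.le, ← Finset.sum_div,
    div_self hZ.ne', ENNReal.ofReal_one]

theorem ae_kernelMeasure_of_forall_paste [∀ v, Fintype (A v)] (𝒢 : GibbsStructure V A)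
    (S : Set V) (pin : ∀ v, A v) (Λ : Finset V) (η : ∀ v, A v) {p : (∀ v, A v) → Prop}
    (hp : MeasurableSet {t | p t}) (h : ∀ τ, p (paste Λ η τ)) :
    ∀ᵐ t ∂kernelMeasure 𝒢 S pin Λ η, p t := by
  rw [ae_iff, kernelMeasure, Measure.finsetSum_apply]
  refine Finset.sum_eq_zero fun τ _ => ?_
  rw [Measure.smul_apply, ← Set.compl_ofPred, Measure.dirac_apply' _ hp.compl,
    Set.indicator_of_notMem (by simpa using h τ), smul_zero]

theorem ae_kernelMeasure_mem_iff [∀ v, Fintype (A v)] (𝒢 : GibbsStructure V A) (S : Set V)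
    (pin : ∀ v, A v) {F : Set V} {Λ : Finset V} (hΛ : (Λ : Set V) ⊆ Fᶜ) (η : ∀ v, A v)
    {B : Set (∀ v, A v)} (hB : MeasurableSet[coordSigma (A := A) F] B) :
    ∀ᵐ t ∂kernelMeasure 𝒢 S pin Λ η, t ∈ B ↔ η ∈ B := by
  refine ae_kernelMeasure_of_forall_paste 𝒢 S pin Λ η
    ((measurableSet_setOfPred.1 (coordSigma_le F B hB)).iff measurable_const).setOf
    fun τ => mem_iff_of_forall_eq hB fun v hv => ?_
  have hvΛ : v ∉ Λ := fun h => hΛ h hv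
  simp [paste, hvΛ]

theorem ae_gibbsUpdate_condExpKernel_coordSigma [∀ v, Fintype (A v)] [∀ v, Nonempty (A v)]
    [StandardBorelSpace (∀ v, A v)] (𝒢 : GibbsStructure V A)
    (ν : Measure (∀ v, A v)) [IsProbabilityMeasure ν] (hν : IsGibbs 𝒢 ν) {F : Set V}
    {Λ : Finset V} (hΛ : (Λ : Set V) ⊆ Fᶜ) :
    ∀ᵐ ω ∂ν, gibbsUpdate 𝒢 Λ (condExpKernel ν (coordSigma (A := A) F) ω)
      = condExpKernel ν (coordSigma (A := A) F) ω :=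
  ae_condExpKernel_bind_eq_self (coordSigma_le F)
    (fun η => isProbabilityMeasure_kernelMeasure 𝒢 η Λ η) (hν Λ)
    fun η _ hB => ae_kernelMeasure_mem_iff 𝒢 ∅ η hΛ η hB

theorem ae_condExpKernel_coordSigma_eq [Countable V] [∀ v, Fintype (A v)]
    [∀ v, MeasurableSingletonClass (A v)] [StandardBorelSpace (∀ v, A v)]
    (ν : Measure (∀ v, A v)) [IsFiniteMeasure ν] (F : Set V) :
    ∀ᵐ ω ∂ν, ∀ᵐ t ∂condExpKernel ν (coordSigma (A := A) F) ω, ∀ v ∈ F, t v = ω v := by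
  have hval : ∀ᵐ ω ∂ν, ∀ v : F, ∀ a : A v,
      ∀ᵐ t ∂condExpKernel ν (coordSigma (A := A) F) ω, t v = a ↔ ω v = a :=
    ae_all_iff.2 fun v => ae_all_iff.2 fun a =>
      condExpKernel_ae_ae_mem_iff (coordSigma_le F) (measurableSet_coordSigma_eval v.2 a)
  filter_upwards [hval] with ω hω
  filter_upwards [ae_all_iff.2 fun v : F => hω v (ω v)] with t ht v hv
  exact (ht ⟨v, hv⟩).2 rfl

end GibbsStructure

/-- If `ν` is a Gibbs measure for `𝒢` and `F ⊆ V`, then for `ν`-a.e. `ω` the conditional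
measure `ν|_ω^{ℬ(F)}` (disintegration along the σ-algebra of the coordinates in `F`) is a
Gibbs measure for the pinned structure `𝒢_{F,ω}`. -/
theorem stmt10 {V : Type*} [Countable V] {A : V → Type*} [∀ v, Fintype (A v)]
    [∀ v, Nonempty (A v)] [∀ v, MeasurableSpace (A v)] [∀ v, MeasurableSingletonClass (A v)]
    [StandardBorelSpace (∀ v, A v)]
    (𝒢 : GibbsStructure V A) (ν : Measure (∀ v, A v)) [IsProbabilityMeasure ν]
    (hν : IsGibbs 𝒢 ν) (F : Set V) :
    ∀ᵐ ω ∂ν, IsGibbsPinned 𝒢 F ω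
      (condExpKernel ν (coordSigma (A := A) F) ω : Measure (∀ v, A v)) := by
  filter_upwards [ae_condExpKernel_coordSigma_eq ν F,
    ae_all_iff.2 fun Λ : Finset V => eventually_imp_distrib_left.2 fun hΛ =>
      ae_gibbsUpdate_condExpKernel_coordSigma 𝒢 ν hν hΛ] with ω hpin hfix
  exact ⟨hpin, hfix⟩

end
end

section
/- If a Gibbs structure 𝒢 satisfies the Dobrushin uniqueness condition (b* < 1), then for any ω ∈ Ω and any F ⊆ V, the pinned structure 𝒢_{F,ω} also satisfies the Dobrushin condition. -/
open MeasureTheory Real Filter Topology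
open scoped ENNReal

noncomputable section
open scoped Classical

open GibbsStructure

variable {V : Type*} {A : V → Type*} [∀ v, Fintype (A v)] [∀ v, Nonempty (A v)]
  [∀ v, MeasurableSpace (A v)] [∀ v, MeasurableSingletonClass (A v)]

/-- The Dobrushin interdependence coefficient `b_{v,u}` for the structure `𝒢` pinned on
`(F, pin)`: the supremum over pairs of admissible configurations agreeing off `u` of the
total variation distance `sup_{B,C} (μ₁(B) - μ₂(C)) - (μ₂(B) - μ₁(C))` between the `v`-th
marginals of the single-site kernels. -/
def dobCoef (𝒢 : GibbsStructure V A) (F : Set V) (pin : ∀ v, A v) (v u : V) : ℝ≥0∞ :=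
  ⨆ p : {p : (∀ w, A w) × (∀ w, A w) // (∀ w, w ≠ u → p.1 w = p.2 w) ∧
      (∀ w ∈ F, p.1 w = pin w) ∧ (∀ w ∈ F, p.2 w = pin w)},
    ⨆ B : Set (A v), ⨆ C : Set (A v),
      (((kernelMeasure 𝒢 F pin {v} p.1.1).map fun x => x v) B +
          ((kernelMeasure 𝒢 F pin {v} p.1.2).map fun x => x v) C) -
        (((kernelMeasure 𝒢 F pin {v} p.1.2).map fun x => x v) B +
          ((kernelMeasure 𝒢 F pin {v} p.1.1).map fun x => x v) C)

/-- The Dobrushin uniqueness condition `b* = sup_v ∑_{u ≠ v} b_{v,u} < 1` for the structure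
`𝒢` pinned on `(F, pin)`. -/
def DobrushinCond (𝒢 : GibbsStructure V A) (F : Set V) (pin : ∀ v, A v) : Prop :=
  (⨆ v : V, ∑' u : {u : V // u ≠ v}, dobCoef 𝒢 F pin v ↑u) < 1

/-!
Pinning can only decrease each coefficient `b_{v,u}`. At a pinned vertex `v` the single-site
kernel is the point mass at the current configuration, so the `v`-marginals of two admissible
configurations are both `δ_{ω v}`. If `u` is pinned, two admissible configurations agreeing off
`u` are equal. If neither is pinned, the pinning constraint is automatically met by every
resampling at `v`, so the pinned kernel is the unpinned one and the supremum defining `b_{v,u}`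
runs over a subset of the unpinned pairs.
-/

section Pinning

omit [∀ v, Nonempty (A v)] [∀ v, MeasurableSingletonClass (A v)]

namespace GibbsStructure

section Paste

omit [∀ v, Fintype (A v)] [∀ v, Nonempty (A v)] [∀ v, MeasurableSpace (A v)]
  [∀ v, MeasurableSingletonClass (A v)]

theorem paste_restr (Λ : Finset V) (η : ∀ v, A v) : paste Λ η (restr Λ η) = η := by
  funext w
  by_cases hw : w ∈ Λ <;> simp [paste, restr, hw]

theorem paste_eq_of_agree_of_subset {Λ : Finset V} {F : Set V} (hΛ : (Λ : Set V) ⊆ F)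
    {pin η : ∀ v, A v} (hη : ∀ w ∈ F, η w = pin w) {τ : ∀ v : Λ, A v}
    (hτ : ∀ w ∈ F, paste Λ η τ w = pin w) : paste Λ η τ = η := by
  funext w
  by_cases hw : w ∈ Λ
  · exact (hτ w (hΛ hw)).trans (hη w (hΛ hw)).symm
  · simp [paste, hw]

theorem paste_agree_of_disjoint {Λ : Finset V} {F : Set V} (hΛ : Disjoint (Λ : Set V) F)
    {pin η : ∀ v, A v} (hη : ∀ w ∈ F, η w = pin w) (τ : ∀ v : Λ, A v) :
    ∀ w ∈ F, paste Λ η τ w = pin w := by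
  intro w hw
  have hwΛ : w ∉ Λ := fun h => hΛ.notMem_of_mem_left h hw
  simpa [paste, hwΛ] using hη w hw

end Paste

theorem kernelMeasure_eq_of_disjoint (𝒢 : GibbsStructure V A) {Λ : Finset V} {F : Set V}
    (hΛ : Disjoint (Λ : Set V) F) {pin η : ∀ v, A v} (hη : ∀ w ∈ F, η w = pin w)
    (pin' : ∀ v, A v) : kernelMeasure 𝒢 F pin Λ η = kernelMeasure 𝒢 ∅ pin' Λ η := by
  have hweight : ∀ τ, pinWeight 𝒢 F pin Λ η τ = pinWeight 𝒢 ∅ pin' Λ η τ := fun τ => by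
    rw [pinWeight, pinWeight, if_pos (paste_agree_of_disjoint hΛ hη τ), if_pos (by simp)]
  simp only [kernelMeasure, hweight]

theorem kernelMeasure_eq_dirac_of_subset (𝒢 : GibbsStructure V A) {Λ : Finset V} {F : Set V}
    (hΛ : (Λ : Set V) ⊆ F) {pin η : ∀ v, A v} (hη : ∀ w ∈ F, η w = pin w) :
    kernelMeasure 𝒢 F pin Λ η = Measure.dirac η := by
  set e := Real.exp (-(energy 𝒢 Λ η))
  have hweight : ∀ τ, pinWeight 𝒢 F pin Λ η τ = if τ = restr Λ η then e else 0 := by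
    intro τ
    by_cases hτ : ∀ w ∈ F, paste Λ η τ w = pin w
    · have hpaste := paste_eq_of_agree_of_subset hΛ hη hτ
      have hτη : τ = restr Λ η := by
        funext w
        simpa [paste, restr] using congrFun hpaste w
      rw [pinWeight, if_pos hτ, hpaste, if_pos hτη]
    · have hτη : τ ≠ restr Λ η := by
        rintro rfl
        exact hτ (by simpa [paste_restr] using hη)
      rw [pinWeight, if_neg hτ, if_neg hτη]
  rw [kernelMeasure, Fintype.sum_eq_single (restr Λ η)]
  · simp [hweight, e, paste_restr]
  · intro τ hτ
    simp [hweight, hτ]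

end GibbsStructure

theorem dobCoef_le_dobCoef_empty (𝒢 : GibbsStructure V A) (ω₀ : ∀ v, A v) (F : Set V)
    (ω : ∀ v, A v) (v u : V) : dobCoef 𝒢 F ω v u ≤ dobCoef 𝒢 ∅ ω₀ v u := by
  refine iSup_le fun p => ?_
  obtain ⟨⟨η₁, η₂⟩, hagree, h₁, h₂⟩ := p
  by_cases hv : v ∈ F
  · have hΛ : (({v} : Finset V) : Set V) ⊆ F := by simpa using hv
    have hmarg : (kernelMeasure 𝒢 F ω {v} η₁).map (fun x => x v) =
        (kernelMeasure 𝒢 F ω {v} η₂).map (fun x => x v) := by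
      rw [kernelMeasure_eq_dirac_of_subset 𝒢 hΛ h₁, kernelMeasure_eq_dirac_of_subset 𝒢 hΛ h₂,
        Measure.map_dirac' (measurable_pi_apply v), Measure.map_dirac' (measurable_pi_apply v),
        h₁ v hv, h₂ v hv]
    simp [hmarg]
  by_cases hu : u ∈ F
  · have hη : η₁ = η₂ := by
      funext w
      by_cases hw : w = u
      · subst hw
        exact (h₁ w hu).trans (h₂ w hu).symm
      · exact hagree w hw
    simp [hη]
  have hΛ : Disjoint (({v} : Finset V) : Set V) F := by simpa using hv
  simp only [kernelMeasure_eq_of_disjoint 𝒢 hΛ h₁ ω₀, kernelMeasure_eq_of_disjoint 𝒢 hΛ h₂ ω₀]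
  exact le_iSup_of_le ⟨(η₁, η₂), hagree, by simp, by simp⟩ le_rfl

end Pinning

theorem stmt15_general (𝒢 : GibbsStructure V A) (ω₀ : ∀ v, A v)
    (h : DobrushinCond 𝒢 ∅ ω₀) :
    ∀ (F : Set V) (ω : ∀ v, A v), DobrushinCond 𝒢 F ω := by
  intro F ω
  refine lt_of_le_of_lt ?_ h
  exact iSup_mono fun v =>
    ENNReal.tsum_le_tsum fun u => dobCoef_le_dobCoef_empty 𝒢 ω₀ F ω v u

/-- If a Gibbs structure satisfies the Dobrushin uniqueness condition `b* < 1`, then every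
pinned structure `𝒢_{F,ω}` satisfies the Dobrushin condition as well. -/
theorem stmt15 [Countable V] (𝒢 : GibbsStructure V A) (ω₀ : ∀ v, A v)
    (h : DobrushinCond 𝒢 ∅ ω₀) :
    ∀ (F : Set V) (ω : ∀ v, A v), DobrushinCond 𝒢 F ω :=
  stmt15_general 𝒢 ω₀ h

end
end
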